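/- arXiv:1909.09496 — 4 statements merged into one kernel-verified Lean document; each statement's English description precedes it below -/
import Mathlib

section
/- Let A = ℚ[π] be the group algebra of a group π with augmentation ideal I, and let η : A × A → A be a Fox pairing, i.e. a ℚ-bilinear map satisfying η(ab,c) = a·η(b,c) + ε(b)·η(a,c) and η(a,bc) = η(a,b)·c + ε(b)·η(a,c) for all a,b,c ∈ A, where ε is the augmentation. Then for all integers m,n ≥ 1, η(I^m, I^n) ⊆ I^{m+n-2} (with the convention I^0 = I^{-1} = I^{-2} = A). -/
/-- The augmentation homomorphism of the rational group algebra,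
sending every group element to `1`. -/
noncomputable def aug (G : Type*) [Group G] : MonoidAlgebra ℚ G →ₐ[ℚ] ℚ :=
  MonoidAlgebra.lift ℚ ℚ G 1

/-- The augmentation ideal `I = ker ε`, as a `ℚ`-submodule of the group algebra. -/
noncomputable def augIdeal (G : Type*) [Group G] : Submodule ℚ (MonoidAlgebra ℚ G) :=
  LinearMap.ker (aug G).toLinearMap

/-- Powers of the augmentation ideal, with the convention `I^0 = A` (the whole algebra). -/
noncomputable def augIdealPow (G : Type*) [Group G] : ℕ → Submodule ℚ (MonoidAlgebra ℚ G)
  | 0 => ⊤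
  | (m + 1) => (augIdeal G) ^ (m + 1)

/-!
Both Fox rules kill a factor lying in `I`, since `ε` vanishes there. Writing `b ∈ I^{n+1}` as a sum
of products `y z` with `y ∈ I`, `z ∈ I^n`, the second rule gives `η(a, y z) = η(a, y) z ∈ I^n`.
Writing `a ∈ I^{m+1}` as a sum of products `x y` with `x ∈ I^m`, `y ∈ I`, the first rule gives
`η(x y, b) = x η(y, b) ∈ I^m I^{n-1}`. It remains that `I^0 = A, I, I^2, …` is multiplicative.
-/

section AugmentationFiltration

variable {G : Type*} [Group G]

lemma mem_augIdeal_iff {x : MonoidAlgebra ℚ G} : x ∈ augIdeal G ↔ aug G x = 0 :=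
  LinearMap.mem_ker

lemma top_mul_augIdeal_le : ⊤ * augIdeal G ≤ augIdeal G :=
  Submodule.mul_le.mpr fun x _ y hy ↦ by
    rw [mem_augIdeal_iff, map_mul, mem_augIdeal_iff.mp hy, mul_zero]

lemma augIdeal_mul_top_le : augIdeal G * ⊤ ≤ augIdeal G :=
  Submodule.mul_le.mpr fun x hx y _ ↦ by
    rw [mem_augIdeal_iff, map_mul, mem_augIdeal_iff.mp hx, zero_mul]

lemma augIdeal_pow_le_augIdealPow (k : ℕ) : augIdeal G ^ k ≤ augIdealPow G k := by
  cases k with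
  | zero => exact le_top
  | succ k => exact le_rfl

lemma augIdealPow_mul_le (a b : ℕ) :
    augIdealPow G a * augIdealPow G b ≤ augIdealPow G (a + b) := by
  cases a with
  | zero =>
    cases b with
    | zero => exact le_top
    | succ b =>
      show ⊤ * augIdeal G ^ (b + 1) ≤ augIdeal G ^ (0 + (b + 1))
      rw [zero_add, pow_succ', ← mul_assoc]
      exact mul_le_mul' top_mul_augIdeal_le le_rfl
  | succ a =>
    cases b with
    | zero =>
      show augIdeal G ^ (a + 1) * ⊤ ≤ augIdeal G ^ (a + 1)
      rw [pow_succ, mul_assoc]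
      exact mul_le_mul' le_rfl augIdeal_mul_top_le
    | succ b =>
      exact (pow_add (augIdeal G) (a + 1) (b + 1)).ge

lemma mul_mem_augIdealPow {a b : ℕ} {x y : MonoidAlgebra ℚ G}
    (hx : x ∈ augIdealPow G a) (hy : y ∈ augIdealPow G b) : x * y ∈ augIdealPow G (a + b) :=
  augIdealPow_mul_le a b (Submodule.mul_mem_mul hx hy)

end AugmentationFiltration

lemma fox_apply_mem_augIdealPow_of_mem_pow_succ {G : Type*} [Group G]
    (η : MonoidAlgebra ℚ G →ₗ[ℚ] MonoidAlgebra ℚ G →ₗ[ℚ] MonoidAlgebra ℚ G)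
    (hfox2 : ∀ a b c : MonoidAlgebra ℚ G, η a (b * c) = η a b * c + aug G b • η a c)
    (a : MonoidAlgebra ℚ G) {n : ℕ} {b : MonoidAlgebra ℚ G} (hb : b ∈ augIdeal G ^ (n + 1)) :
    η a b ∈ augIdealPow G n := by
  rw [pow_succ'] at hb
  refine (Submodule.mul_le (P := (augIdealPow G n).comap (η a)).mpr ?_) hb
  intro y hy z hz
  rw [Submodule.mem_comap, hfox2, mem_augIdeal_iff.mp hy, zero_smul, add_zero, ← zero_add n]
  exact mul_mem_augIdealPow Submodule.mem_top (augIdeal_pow_le_augIdealPow n hz)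

/-- For a Fox pairing `η` on `ℚ[π]`, one has `η(I^m, I^n) ⊆ I^{m+n-2}` for all `m, n ≥ 1`. -/
theorem fox_pairing_filtration (G : Type*) [Group G]
    (η : MonoidAlgebra ℚ G →ₗ[ℚ] MonoidAlgebra ℚ G →ₗ[ℚ] MonoidAlgebra ℚ G)
    (hfox1 : ∀ a b c : MonoidAlgebra ℚ G,
      η (a * b) c = a * η b c + aug G b • η a c)
    (hfox2 : ∀ a b c : MonoidAlgebra ℚ G,
      η a (b * c) = η a b * c + aug G b • η a c)
    (m n : ℕ) (hm : 1 ≤ m) (hn : 1 ≤ n) :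
    ∀ a ∈ (augIdeal G) ^ m, ∀ b ∈ (augIdeal G) ^ n,
      η a b ∈ augIdealPow G (m + n - 2) := by
  obtain ⟨m, rfl⟩ : ∃ m', m = m' + 1 := ⟨m - 1, by omega⟩
  obtain ⟨n, rfl⟩ : ∃ n', n = n' + 1 := ⟨n - 1, by omega⟩
  rw [show m + 1 + (n + 1) - 2 = m + n by omega]
  intro a ha b hb
  rw [pow_succ] at ha
  refine (Submodule.mul_le (P := (augIdealPow G (m + n)).comap (η.flip b)).mpr ?_) ha
  intro x hx y hy
  rw [Submodule.mem_comap, LinearMap.flip_apply, hfox1, mem_augIdeal_iff.mp hy, zero_smul,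
    add_zero]
  exact mul_mem_augIdealPow (augIdeal_pow_le_augIdealPow m hx)
    (fox_apply_mem_augIdealPow_of_mem_pow_succ η hfox2 y hb)
end

section
/- Let A be a complete filtered ℚ-algebra A = lim← A/Î^m and let G be the group of filtration-preserving algebra automorphisms of A. For k ≥ 0 define G[k] to be the subgroup of those u ∈ G such that u(a) − a ∈ Î^{k+1+m} for all a ∈ Î^m and all m ≥ 0 (i.e. u acts trivially on each A/Î^{k+1+m} relative to Î^m; equivalently u acts as the identity on the associated graded shifted by k). Then the filtration {G[k]} is strongly central: [G[j], G[k]] ⊆ G[j+k] for all j, k ≥ 0. -/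
/-- The Johnson-type filtration of the group of filtration-preserving automorphisms of a
filtered `ℚ`-algebra is strongly central: if `(u − id)(Î^m) ⊆ Î^{m+j+1}` and
`(v − id)(Î^m) ⊆ Î^{m+k+1}` for all `m`, then the commutator `u v u⁻¹ v⁻¹` satisfies
`(u v u⁻¹ v⁻¹ − id)(Î^m) ⊆ Î^{m+(j+k)+1}` for all `m`. -/
theorem johnson_filtration_strongly_central (A : Type*) [Ring A] [Algebra ℚ A]
    (F : ℕ → Submodule ℚ A)
    (hF0 : F 0 = ⊤)
    (hFanti : ∀ m n : ℕ, m ≤ n → F n ≤ F m)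
    (hFmul : ∀ m n : ℕ, ∀ a ∈ F m, ∀ b ∈ F n, a * b ∈ F (m + n))
    (u v : A ≃ₐ[ℚ] A) (j k : ℕ)
    (hu : ∀ m : ℕ, ∀ a ∈ F m, u a - a ∈ F (m + j + 1))
    (hv : ∀ m : ℕ, ∀ a ∈ F m, v a - a ∈ F (m + k + 1)) :
    ∀ m : ℕ, ∀ a ∈ F m, (u * v * u⁻¹ * v⁻¹ : A ≃ₐ[ℚ] A) a - a ∈ F (m + (j + k) + 1) := by
  -- the inverse of a filtration-unipotent automorphism preserves the filtration
  have inv_mem : ∀ (w : A ≃ₐ[ℚ] A) (jw : ℕ),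
      (∀ m : ℕ, ∀ a ∈ F m, w a - a ∈ F (m + jw + 1)) →
      ∀ m : ℕ, ∀ a ∈ F m, w.symm a ∈ F m := by
    intro w jw hw m a ha
    have key : ∀ n : ℕ, w.symm a ∈ F (min m n) := by
      intro n
      induction n with
      | zero => simp [hF0]
      | succ n ih =>
        have hwb : w (w.symm a) = a := w.apply_symm_apply a
        have h1 : w (w.symm a) - w.symm a ∈ F (min m n + jw + 1) := hw _ _ ih
        rw [hwb] at h1
        have heq : w.symm a = a - (a - w.symm a) := by abel
        rw [heq]
        exact sub_mem (hFanti _ _ (min_le_left _ _) ha)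
          (hFanti _ _ (by omega) h1)
    have := key m
    simpa using this
  intro m a ha
  set b : A := u.symm (v.symm a) with hb_def
  have hb : b ∈ F m := inv_mem u j hu m _ (inv_mem v k hv m a ha)
  have hvub : v (u b) = a := by
    simp [hb_def]
  have happ : (u * v * u⁻¹ * v⁻¹ : A ≃ₐ[ℚ] A) a = u (v b) := rfl
  have hub : u b - b ∈ F (m + j + 1) := hu m b hb
  have hvb : v b - b ∈ F (m + k + 1) := hv m b hb
  have h1 : u (v b - b) - (v b - b) ∈ F (m + k + 1 + j + 1) := hu _ _ hvb
  have h2 : v (u b - b) - (u b - b) ∈ F (m + j + 1 + k + 1) := hv _ _ hub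
  rw [map_sub] at h1 h2
  rw [hvub] at h2
  have heq : u (v b) - a =
      (u (v b) - u b - (v b - b)) - (a - v b - (u b - b)) := by abel
  rw [happ, heq]
  exact sub_mem (hFanti _ _ (by omega) h1) (hFanti _ _ (by omega) h2)
end

section
/- Let A = ℚ[π] be a group algebra with Fox pairing η, and define the derived form σ_η : A × A → A on group elements x, y ∈ π by σ_η(x, y) = y·x^{−1}·η(x, y) using the group-like coproduct (this is the specialization of the Hopf-algebraic formula σ_η(a,b) = ∑ b′ S(η(a″,b″)′) a′ η(a″,b″)″ to group-likes, where Δ(x) = x⊗x). Then for each fixed x ∈ π, the linear extension σ_η(x, −) : A → A is a derivation of A: σ_η(x, yz) = σ_η(x,y)·z + y·σ_η(x,z) for all y, z ∈ π. -/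
/-- The derived form of a Fox pairing on group elements: writing
`η(x,y) = ∑_g c_g·g`, one sets `σ_η(x,y) = ∑_g c_g · (y·g⁻¹·x·g)`; this is the
specialization `∑ b′·S(η(a″,b″)′)·a′·η(a″,b″)″` of the Hopf-algebraic formula to
group-like elements `Δ(x) = x ⊗ x`. -/
noncomputable def sigmaEta (G : Type*) [Group G]
    (η : MonoidAlgebra ℚ G →ₗ[ℚ] MonoidAlgebra ℚ G →ₗ[ℚ] MonoidAlgebra ℚ G)
    (x y : G) : MonoidAlgebra ℚ G :=
  Finsupp.sum (η (MonoidAlgebra.of ℚ G x) (MonoidAlgebra.of ℚ G y)).coeff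
    fun g c => c • MonoidAlgebra.of ℚ G (y * g⁻¹ * x * g)

/-! Writing `κ_x` for the linear extension of `g ↦ g⁻¹ x g`, one has `σ_η(x, y) = y · κ_x(η(x, y))`
and `κ_x(p z) = z⁻¹ κ_x(p) z`. Applying `κ_x` to the second Fox rule
`η(x, yz) = η(x, y) z + η(x, z)` and multiplying by `yz` on the left gives the Leibniz rule. -/

namespace MonoidAlgebra

variable {k G : Type*} [Semiring k] [Group G]

lemma sum_coeff_smul_of_eq_of_mul_mapDomain (f : G → G) (y : G) (p : MonoidAlgebra k G) :
    p.coeff.sum (fun g c => c • of k G (y * f g)) = of k G y * mapDomain f p := by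
  conv_rhs => rw [← sum_coeff_single p, mapDomain_sum, Finsupp.mul_sum]
  simp only [of_apply, smul_single', mapDomain_single, single_mul_single, one_mul, mul_one]

lemma mapDomain_conj_mul_of (x z : G) (p : MonoidAlgebra k G) :
    mapDomain (fun g => g⁻¹ * x * g) (p * of k G z)
      = of k G z⁻¹ * mapDomain (fun g => g⁻¹ * x * g) p * of k G z := by
  induction p using induction_linear with
  | zero => simp
  | add p q hp hq => rw [add_mul, mapDomain_add, mapDomain_add, hp, hq, mul_add, add_mul]
  | single g c =>
    simp only [of_apply, single_mul_single, mapDomain_single, one_mul, mul_one]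
    congr 1
    group

end MonoidAlgebra

open MonoidAlgebra

lemma sigmaEta_eq_of_mul_mapDomain_conj (G : Type*) [Group G]
    (η : MonoidAlgebra ℚ G →ₗ[ℚ] MonoidAlgebra ℚ G →ₗ[ℚ] MonoidAlgebra ℚ G) (x y : G) :
    sigmaEta G η x y
      = of ℚ G y * mapDomain (fun g => g⁻¹ * x * g) (η (of ℚ G x) (of ℚ G y)) := by
  rw [sigmaEta, ← sum_coeff_smul_of_eq_of_mul_mapDomain]
  simp only [mul_assoc]

theorem sigmaEta_derivation_general (G : Type*) [Group G]
    (η : MonoidAlgebra ℚ G →ₗ[ℚ] MonoidAlgebra ℚ G →ₗ[ℚ] MonoidAlgebra ℚ G)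
    (hfox2 : ∀ a b c : MonoidAlgebra ℚ G,
      η a (b * c) = η a b * c + aug G b • η a c)
    (x y z : G) :
    sigmaEta G η x (y * z)
      = sigmaEta G η x y * MonoidAlgebra.of ℚ G z
        + MonoidAlgebra.of ℚ G y * sigmaEta G η x z := by
  have haug : aug G (of ℚ G y) = 1 := by simp [aug]
  simp only [sigmaEta_eq_of_mul_mapDomain_conj, map_mul, hfox2, haug, one_smul, mapDomain_add,
    mapDomain_conj_mul_of, mul_add]
  simp only [← mul_assoc, mul_inv_cancel_right, ← map_mul]

/-- For a Fox pairing `η` on `ℚ[π]` and any fixed `x ∈ π`, the derived form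
`σ_η(x, −)` (extended linearly) is a derivation of `ℚ[π]`:
`σ_η(x, yz) = σ_η(x,y)·z + y·σ_η(x,z)` for all `y, z ∈ π`. -/
theorem sigmaEta_derivation (G : Type*) [Group G]
    (η : MonoidAlgebra ℚ G →ₗ[ℚ] MonoidAlgebra ℚ G →ₗ[ℚ] MonoidAlgebra ℚ G)
    (hfox1 : ∀ a b c : MonoidAlgebra ℚ G,
      η (a * b) c = a * η b c + aug G b • η a c)
    (hfox2 : ∀ a b c : MonoidAlgebra ℚ G,
      η a (b * c) = η a b * c + aug G b • η a c)
    (x y z : G) :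
    sigmaEta G η x (y * z)
      = sigmaEta G η x y * MonoidAlgebra.of ℚ G z
        + MonoidAlgebra.of ℚ G y * sigmaEta G η x z :=
  sigmaEta_derivation_general G η hfox2 x y z
end

section
/- Let π be a finitely generated free group, I the augmentation ideal of ℚ[π], and π̂ the set of group-like elements of the I-adic completion of ℚ[π], with filtration π̂_m = π̂ ∩ (1 + Î^m). Then the natural map π → π̂ is injective. -/
/-!
The truncated Magnus expansion `xᵢ ↦ exp Xᵢ` maps `π` into the units of the algebra of
noncommutative polynomials in the `Xᵢ` modulo words of length `≥ N`, each `g` going to `1` plus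
words of positive length. The induced algebra map on `ℚ[π]` therefore sends `I` into an ideal
whose `N`-th power vanishes, so it kills `I ^ N`.

A nontrivial `z ∈ π` is a product of syllables `x_{i₁}^{e₁} ⋯ x_{iₖ}^{eₖ}` with consecutive
generators distinct and all `eⱼ ≠ 0`. Its image `∏ⱼ exp (eⱼ X_{iⱼ})` has coefficient
`e₁ ⋯ eₖ ≠ 0` on the word `X_{i₁} ⋯ X_{iₖ}`: as no two adjacent letters of that word agree, each
factor contributes at most one letter, through its linear term `eⱼ X_{iⱼ}`. So `z` is not `1`
modulo `I ^ (k + 1)`.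
-/

open MonoidAlgebra Polynomial

namespace FreeGroup

variable {α : Type*}

def IsReducedSyllables (bs : List (α × ℤ)) : Prop :=
  (bs.map Prod.fst).IsChain (· ≠ ·) ∧ ∀ b ∈ bs, b.2 ≠ 0

theorem IsReducedSyllables.exists_zpow_mul {bs : List (α × ℤ)} (hbs : IsReducedSyllables bs)
    (i : α) (d : ℤ) :
    ∃ bs' : List (α × ℤ), IsReducedSyllables bs' ∧
      (bs'.map fun b => of b.1 ^ b.2).prod = of i ^ d * (bs.map fun b => of b.1 ^ b.2).prod := by
  by_cases hhead : ∃ e bs', bs = (i, e) :: bs'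
  · obtain ⟨e, bs', rfl⟩ := hhead
    have hprod : of i ^ d * ((((i, e) :: bs').map fun b => of b.1 ^ b.2).prod) =
        of i ^ (d + e) * (bs'.map fun b => of b.1 ^ b.2).prod := by
      simp [← mul_assoc, zpow_add]
    rw [hprod]
    by_cases hde : d + e = 0
    · refine ⟨bs', ⟨hbs.1.tail, fun b hb => hbs.2 b (List.mem_cons_of_mem _ hb)⟩, ?_⟩
      rw [hde, zpow_zero, one_mul]
    · refine ⟨(i, d + e) :: bs', ⟨hbs.1, ?_⟩, rfl⟩
      rintro b (_ | ⟨_, hb⟩)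
      · exact hde
      · exact hbs.2 b (List.mem_cons_of_mem _ hb)
  · by_cases hd : d = 0
    · exact ⟨bs, hbs, by rw [hd, zpow_zero, one_mul]⟩
    refine ⟨(i, d) :: bs, ⟨List.isChain_cons.mpr ⟨?_, hbs.1⟩, ?_⟩, rfl⟩
    · rintro j hj rfl
      obtain _ | ⟨⟨j, e⟩, bs'⟩ := bs
      · simp at hj
      · simp only [List.map_cons, List.head?_cons, Option.mem_def, Option.some.injEq] at hj
        exact hhead ⟨e, bs', by rw [hj]⟩
    · rintro b (_ | ⟨_, hb⟩)
      · exact hd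
      · exact hbs.2 b hb

theorem exists_isReducedSyllables_prod_eq (x : FreeGroup α) :
    ∃ bs : List (α × ℤ), IsReducedSyllables bs ∧ (bs.map fun b => of b.1 ^ b.2).prod = x := by
  have hx : x ∈ Subgroup.closure (Set.range of) := by
    rw [closure_range_of]
    trivial
  induction hx using Subgroup.closure_induction_left with
  | one => exact ⟨[], ⟨List.isChain_nil, by simp⟩, rfl⟩
  | mul_left _ hx _ _ ih =>
    obtain ⟨i, rfl⟩ := hx
    obtain ⟨bs, hbs, rfl⟩ := ih
    simpa using hbs.exists_zpow_mul i 1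
  | inv_mul_cancel _ hx _ _ ih =>
    obtain ⟨i, rfl⟩ := hx
    obtain ⟨bs, hbs, rfl⟩ := ih
    simpa using hbs.exists_zpow_mul i (-1)

end FreeGroup

namespace Polynomial

variable {k A : Type*} [CommSemiring k] [Semiring A] [Algebra k A]

theorem aeval_eq_coeff_zero_add_mul (x : A) (p : k[X]) :
    aeval x p = algebraMap k A (p.coeff 0) +
      x * (algebraMap k A (p.coeff 1) + x * aeval x p.divX.divX) := by
  conv_lhs => rw [← X_mul_divX_add p, ← X_mul_divX_add p.divX]
  simp only [map_add, map_mul, aeval_X, aeval_C, coeff_divX, mul_add]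
  abel

noncomputable def truncExp (N : ℕ) (e : ℚ) : ℚ[X] :=
  ∑ c ∈ Finset.range N, monomial c ((c.factorial : ℚ)⁻¹ * e ^ c)

theorem coeff_one_truncExp {N : ℕ} (hN : 2 ≤ N) (e : ℚ) : (truncExp N e).coeff 1 = e := by
  simp [truncExp, finsetSum_coeff, coeff_monomial]
  omega

end Polynomial

namespace IsNilpotent

variable {A : Type*} [Ring A] [Algebra ℚ A]

theorem exp_smul_eq_aeval_truncExp {a : A} {N : ℕ} (h : a ^ N = 0) (e : ℚ) :
    exp (e • a) = aeval a (truncExp N e) := by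
  rw [exp_eq_sum (k := N) (by rw [_root_.smul_pow, h, smul_zero]), truncExp, map_sum]
  refine Finset.sum_congr rfl fun c _ => ?_
  rw [aeval_monomial, _root_.smul_pow, smul_smul, Algebra.smul_def]

theorem coe_isUnit_exp_unit_zpow {a : A} (ha : IsNilpotent a) (e : ℤ) :
    (((isUnit_exp ha).unit ^ e : Aˣ) : A) = exp ((e : ℚ) • a) := by
  have hadd (q r : ℚ) : exp (q • a) * exp (r • a) = exp ((q + r) • a) := by
    rw [add_smul, exp_add_of_commute ((Commute.refl a).smul_left q |>.smul_right r)
      (ha.smul q) (ha.smul r)]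
  have hinv : (((isUnit_exp ha).unit⁻¹ : Aˣ) : A) = exp ((-1 : ℚ) • a) :=
    Units.inv_eq_of_mul_eq_one_right (by simpa using exp_mul_exp_neg_self ha)
  induction e using Int.induction_on with
  | zero => simp
  | succ e ih =>
    rw [zpow_add_one, Units.val_mul, ih, IsUnit.unit_spec, Int.cast_add, Int.cast_one, ← hadd,
      one_smul]
  | pred e ih =>
    rw [zpow_sub_one, Units.val_mul, ih, hinv, hadd]
    push_cast
    ring_nf

end IsNilpotent

namespace Magnus

variable {k α : Type*} [CommSemiring k]

theorem coeff_mul_eq_zero_of_length_lt {f g : MonoidAlgebra k (FreeMonoid α)} {a b : ℕ}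
    (hf : ∀ w : FreeMonoid α, w.length < a → f.coeff w = 0)
    (hg : ∀ w : FreeMonoid α, w.length < b → g.coeff w = 0)
    {w : FreeMonoid α} (hw : w.length < a + b) : (f * g).coeff w = 0 := by
  classical
  by_contra h
  obtain ⟨u, hu, v, hv, rfl⟩ :=
    Finset.mem_mul.mp (support_coeff_mul_subset f g (Finsupp.mem_support_iff.mpr h))
  have hu' : a ≤ u.length := not_lt.mp fun h' => Finsupp.mem_support_iff.mp hu (hf u h')
  have hv' : b ≤ v.length := not_lt.mp fun h' => Finsupp.mem_support_iff.mp hv (hg v h')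
  rw [FreeMonoid.length_mul] at hw
  omega

variable (k α) in
def lengthIdeal (N : ℕ) : Ideal (MonoidAlgebra k (FreeMonoid α)) where
  carrier := {f | ∀ w : FreeMonoid α, w.length < N → f.coeff w = 0}
  add_mem' hf hg w hw := by simp [hf w hw, hg w hw]
  zero_mem' _ _ := rfl
  smul_mem' _ _ hf _ hw :=
    coeff_mul_eq_zero_of_length_lt (a := 0) (fun _ h => absurd h (Nat.not_lt_zero _)) hf
      (by omega)

theorem mul_mem_lengthIdeal {a b : ℕ} {f g : MonoidAlgebra k (FreeMonoid α)}
    (hf : f ∈ lengthIdeal k α a) (hg : g ∈ lengthIdeal k α b) :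
    f * g ∈ lengthIdeal k α (a + b) :=
  fun _ => coeff_mul_eq_zero_of_length_lt hf hg

instance (N : ℕ) : (lengthIdeal k α N).IsTwoSided where
  mul_mem_of_left _ hf := by
    simpa using mul_mem_lengthIdeal hf (b := 0) fun _ h => absurd h (Nat.not_lt_zero _)

theorem lengthIdeal_succ_le_one (N : ℕ) : lengthIdeal k α (N + 1) ≤ lengthIdeal k α 1 :=
  fun _ hf w hw => hf w (by omega)

theorem single_of_mem_lengthIdeal_one (i : α) :
    (single (FreeMonoid.of i) 1 : MonoidAlgebra k (FreeMonoid α)) ∈ lengthIdeal k α 1 := by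
  intro w hw
  rw [Nat.lt_one_iff, FreeMonoid.length_eq_zero] at hw
  simp [hw, coeff_single]

theorem restrictScalars_lengthIdeal_one_pow_le (N : ℕ) :
    (lengthIdeal k α 1).restrictScalars k ^ N ≤ (lengthIdeal k α N).restrictScalars k := by
  induction N with
  | zero => exact fun _ _ _ hw => absurd hw (Nat.not_lt_zero _)
  | succ N ih =>
    rw [pow_succ, Submodule.mul_le]
    exact fun f hf g hg => mul_mem_lengthIdeal (ih hf) hg

theorem coeff_single_of_mul_ofList_eq_zero (i : α) {l : List α} (hl : l.head? ≠ some i)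
    (P : MonoidAlgebra k (FreeMonoid α)) :
    (single (FreeMonoid.of i) 1 * P).coeff (FreeMonoid.ofList l) = 0 :=
  coeff_single_mul_of_forall_mul_ne _ _ fun d hd =>
    hl (by simpa using (congrArg (fun w => w.toList.head?) hd).symm)

theorem coeff_single_of_mul_of_mul [DecidableEq α] (i a : α) (v : FreeMonoid α)
    (P : MonoidAlgebra k (FreeMonoid α)) :
    (single (FreeMonoid.of i) 1 * P).coeff (FreeMonoid.of a * v) =
      if a = i then P.coeff v else 0 := by
  split_ifs with h
  · subst h
    rw [coeff_single_mul_eq_mul_coeff v (fun _ _ => mul_right_inj _), one_mul]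
  · simpa using coeff_single_of_mul_ofList_eq_zero i (l := a :: v.toList) (by simpa using h) P

theorem coeff_aeval_mul_ofList_cons [DecidableEq α] (i : α) (p : k[X])
    (P : MonoidAlgebra k (FreeMonoid α)) {a : α} {l : List α} (hl : (a :: l).IsChain (· ≠ ·)) :
    (aeval (single (FreeMonoid.of i) 1) p * P).coeff (FreeMonoid.ofList (a :: l)) =
      p.coeff 0 * P.coeff (FreeMonoid.ofList (a :: l)) +
        if a = i then p.coeff 1 * P.coeff (FreeMonoid.ofList l) else 0 := by
  rw [aeval_eq_coeff_zero_add_mul, add_mul, mul_assoc, ← Algebra.smul_def, MonoidAlgebra.coeff_add,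
    Finsupp.add_apply, coeff_smul_apply, smul_eq_mul, FreeMonoid.ofList_cons,
    coeff_single_of_mul_of_mul]
  split_ifs with h
  · subst h
    have hhead : l.head? ≠ some a := fun hl' => (List.isChain_cons.mp hl).1 _ hl' rfl
    rw [add_mul, ← Algebra.smul_def, MonoidAlgebra.coeff_add, Finsupp.add_apply, coeff_smul_apply,
      smul_eq_mul, mul_assoc, coeff_single_of_mul_ofList_eq_zero a hhead, add_zero]
  · rfl

theorem coeff_prod_aeval [DecidableEq α] (ps : List (α × k[X])) {l : List α}
    (hl : l.IsChain (· ≠ ·)) (hlen : ps.length ≤ l.length) :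
    ((ps.map fun p => aeval (single (FreeMonoid.of p.1) 1) p.2).prod).coeff
        (FreeMonoid.ofList l) =
      if l = ps.map Prod.fst then (ps.map fun p => p.2.coeff 1).prod else 0 := by
  induction ps generalizing l with
  | nil => cases l <;> simp [MonoidAlgebra.one_def, coeff_single]
  | cons p ps ih =>
    obtain ⟨i, p⟩ := p
    obtain _ | ⟨a, l⟩ := l
    · simp at hlen
    simp only [List.length_cons] at hlen
    have hlong : a :: l ≠ ps.map Prod.fst := fun h => by
      have := congrArg List.length h
      simp only [List.length_cons, List.length_map] at this
      omega
    rw [List.map_cons, List.prod_cons, coeff_aeval_mul_ofList_cons i p _ hl,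
      ih hl (by simp; omega), if_neg hlong, ih (l := l) hl.tail (by omega)]
    by_cases hai : a = i <;> by_cases hlps : l = ps.map Prod.fst <;> simp [hai, hlps]

variable (α) in
abbrev TruncAlgebra (N : ℕ) := MonoidAlgebra ℚ (FreeMonoid α) ⧸ lengthIdeal ℚ α N

theorem mk_single_of_pow_eq_zero (N : ℕ) (i : α) :
    Ideal.Quotient.mkₐ ℚ (lengthIdeal ℚ α N) (single (FreeMonoid.of i) 1) ^ N = 0 := by
  rw [← map_pow, Ideal.Quotient.mkₐ_eq_mk, Ideal.Quotient.eq_zero_iff_mem]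
  exact restrictScalars_lengthIdeal_one_pow_le N
    (Submodule.pow_mem_pow ((lengthIdeal ℚ α 1).restrictScalars ℚ)
      (single_of_mem_lengthIdeal_one i) N)

variable (α) in
noncomputable def magnus (N : ℕ) : FreeGroup α →* (TruncAlgebra α N)ˣ :=
  FreeGroup.lift fun i => (IsNilpotent.isUnit_exp ⟨N, mk_single_of_pow_eq_zero N i⟩).unit

theorem coe_magnus_of_zpow (N : ℕ) (i : α) (e : ℤ) :
    (magnus α N (FreeGroup.of i ^ e) : TruncAlgebra α N) =
      Ideal.Quotient.mkₐ ℚ _ (aeval (single (FreeMonoid.of i) 1) (truncExp N e)) := by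
  rw [map_zpow, magnus, FreeGroup.lift_apply_of,
    IsNilpotent.coe_isUnit_exp_unit_zpow ⟨N, mk_single_of_pow_eq_zero N i⟩,
    IsNilpotent.exp_smul_eq_aeval_truncExp (mk_single_of_pow_eq_zero N i), aeval_algHom_apply]

theorem coe_magnus_prod_zpow (N : ℕ) (bs : List (α × ℤ)) :
    (magnus α N (bs.map fun b => FreeGroup.of b.1 ^ b.2).prod : TruncAlgebra α N) =
      Ideal.Quotient.mkₐ ℚ _
        (bs.map fun b => aeval (single (FreeMonoid.of b.1) 1) (truncExp N b.2)).prod := by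
  rw [map_list_prod, ← Units.coeHom_apply, map_list_prod, map_list_prod, List.map_map,
    List.map_map, List.map_map]
  exact congrArg List.prod (List.map_congr_left fun b _ => coe_magnus_of_zpow _ b.1 b.2)

variable (α) in
noncomputable def magnusAlg (N : ℕ) :
    MonoidAlgebra ℚ (FreeGroup α) →ₐ[ℚ] TruncAlgebra α N :=
  MonoidAlgebra.lift ℚ _ _ ((Units.coeHom _).comp (magnus α N))

theorem magnusAlg_of (N : ℕ) (g : FreeGroup α) :
    magnusAlg α N (MonoidAlgebra.of ℚ _ g) = magnus α N g :=
  MonoidAlgebra.lift_of _ g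

theorem factor_comp_magnusAlg (N : ℕ) :
    (Ideal.Quotient.factorₐ ℚ (lengthIdeal_succ_le_one (k := ℚ) (α := α) N)).comp
      (magnusAlg α (N + 1)) = (Algebra.ofId ℚ _).comp (aug (FreeGroup α)) := by
  set factor := Ideal.Quotient.factorₐ ℚ (lengthIdeal_succ_le_one (k := ℚ) (α := α) N)
  have hunits : (Units.map (factor : TruncAlgebra α (N + 1) →* TruncAlgebra α 1)).comp
      (magnus α (N + 1)) = 1 := by
    refine FreeGroup.ext_hom _ _ fun i => Units.ext ?_
    have hX : factor (Ideal.Quotient.mkₐ ℚ _ (single (FreeMonoid.of i) 1)) = 0 :=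
      Ideal.Quotient.eq_zero_iff_mem.mpr (single_of_mem_lengthIdeal_one i)
    simp only [MonoidHom.comp_apply, magnus, FreeGroup.lift_apply_of, Units.coe_map,
      IsUnit.unit_spec, MonoidHom.coe_coe, MonoidHom.one_apply, Units.val_one]
    rw [IsNilpotent.map_exp ⟨_, mk_single_of_pow_eq_zero (N + 1) i⟩, hX, IsNilpotent.exp_zero]
  ext g
  have h1 : factor (magnus α (N + 1) g) = 1 := congrArg Units.val (DFunLike.congr_fun hunits g)
  simpa [aug, ← MonoidAlgebra.of_apply, magnusAlg_of, MonoidAlgebra.lift_of] using h1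

theorem magnusAlg_eq_zero_of_mem_augIdeal_pow {N : ℕ} {a : MonoidAlgebra ℚ (FreeGroup α)}
    (ha : a ∈ augIdeal (FreeGroup α) ^ (N + 1)) : magnusAlg α (N + 1) a = 0 := by
  set mk := (Ideal.Quotient.mkₐ ℚ (lengthIdeal ℚ α (N + 1))).toLinearMap
  have haug : (augIdeal (FreeGroup α)).map (magnusAlg α (N + 1)).toLinearMap ≤
      ((lengthIdeal ℚ α 1).restrictScalars ℚ).map mk := by
    rintro _ ⟨a, ha, rfl⟩
    obtain ⟨b, hb⟩ := Ideal.Quotient.mkₐ_surjective ℚ _ (magnusAlg α (N + 1) a)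
    refine ⟨b, Ideal.Quotient.eq_zero_iff_mem.mp ?_, hb⟩
    have h := DFunLike.congr_fun (factor_comp_magnusAlg N) a
    have ha : aug (FreeGroup α) a = 0 := ha
    rw [AlgHom.comp_apply, AlgHom.comp_apply, ← hb, ha, map_zero] at h
    exact h
  have hpow := pow_le_pow_left' haug (N + 1)
  rw [← Submodule.map_pow, ← Submodule.map_pow] at hpow
  have hbot : ((lengthIdeal ℚ α 1).restrictScalars ℚ ^ (N + 1)).map mk = ⊥ := by
    rw [eq_bot_iff]
    rintro _ ⟨b, hb, rfl⟩
    exact Ideal.Quotient.eq_zero_iff_mem.mpr (restrictScalars_lengthIdeal_one_pow_le _ hb)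
  rw [hbot] at hpow
  exact (Submodule.mem_bot ℚ).mp (hpow ⟨a, ha, rfl⟩)

theorem exists_magnus_ne_one {z : FreeGroup α} (hz : z ≠ 1) :
    ∃ N, magnus α (N + 1) z ≠ 1 := by
  classical
  obtain ⟨bs, ⟨hchain, hne⟩, rfl⟩ := FreeGroup.exists_isReducedSyllables_prod_eq z
  have hbs : bs ≠ [] := by
    rintro rfl
    exact hz rfl
  set N := bs.length
  refine ⟨N, fun h => ?_⟩
  rw [← Units.val_eq_one, coe_magnus_prod_zpow, ← map_one (Ideal.Quotient.mkₐ ℚ _),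
    Ideal.Quotient.mkₐ_eq_mk, Ideal.Quotient.eq] at h
  have hcoeff := h (FreeMonoid.ofList (bs.map Prod.fst)) (by simp [N, FreeMonoid.length])
  have hprod := coeff_prod_aeval (bs.map fun b => (b.1, truncExp (N + 1) (b.2 : ℚ)))
    (l := bs.map Prod.fst) (by simpa using hchain) (by simp [N])
  simp only [List.map_map, Function.comp_def] at hprod
  rw [MonoidAlgebra.coeff_sub, Finsupp.sub_apply, hprod] at hcoeff
  have hone : (1 : MonoidAlgebra ℚ (FreeMonoid α)).coeff (FreeMonoid.ofList (bs.map Prod.fst)) = 0 := by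
    rw [MonoidAlgebra.one_def, coeff_single, Finsupp.single_apply, if_neg]
    rw [eq_comm, ← FreeMonoid.length_eq_zero]
    simpa [FreeMonoid.length] using hbs
  have hN : 2 ≤ N + 1 := by simpa [N, Nat.one_le_iff_ne_zero] using hbs
  simp [hone, coeff_one_truncExp hN, List.prod_eq_zero_iff] at hcoeff
  obtain ⟨i, hi⟩ := hcoeff
  exact hne _ hi rfl

end Magnus

/-- For a finitely generated free group `π`, the natural map from `π` to the Malcev
completion `π̂` (the group-likes of the `I`-adic completion `lim← ℚ[π]/I^m`) is injective:
the composite of `π → ℚ[π]` with the projections to all quotients `ℚ[π]/I^m` is injective. -/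
theorem free_group_to_malcev_injective (n : ℕ) :
    Function.Injective (fun x : FreeGroup (Fin n) =>
      fun m : ℕ =>
        Submodule.Quotient.mk (p := (augIdeal (FreeGroup (Fin n))) ^ (m + 1))
          (MonoidAlgebra.of ℚ (FreeGroup (Fin n)) x)) := by
  intro x y h
  by_contra hxy
  obtain ⟨N, hN⟩ := Magnus.exists_magnus_ne_one (mul_inv_eq_one.not.mpr hxy)
  have hsub := (Submodule.Quotient.eq _).mp (congrFun h N)
  apply hN
  rw [map_mul, map_inv, mul_inv_eq_one]
  refine Units.ext ?_
  rw [← Magnus.magnusAlg_of, ← Magnus.magnusAlg_of, ← sub_eq_zero, ← map_sub]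
  exact Magnus.magnusAlg_eq_zero_of_mem_augIdeal_pow hsub
end
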